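/- Let m ≥ 1 and let (a_n) be a bounded sequence of complex numbers such that ∑_{n≥0} C(m+n, m) |(𝔡₁^{m+1} a)_n| < ∞. Then ∑_{n≥0} C(m+n−1, m−1) |(𝔡₁^m a)_n| < ∞. -/

import Mathlib

/-- The forward discrete derivative `(𝔡₁ a) n = a n - a (n+1)`. -/
def d1 (a : ℕ → ℂ) : ℕ → ℂ := fun n => a n - a (n + 1)

/-- Iterated discrete derivatives of a bounded sequence are bounded. -/
lemma d1_iter_bound (a : ℕ → ℂ) (M : ℝ) (hbd : ∀ n, ‖a n‖ ≤ M) :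
    ∀ k n, ‖d1^[k] a n‖ ≤ 2 ^ k * M := by
  intro k
  induction k with
  | zero => intro n; simpa using hbd n
  | succ k ih =>
    intro n
    rw [Function.iterate_succ_apply']
    calc ‖d1 (d1^[k] a) n‖ = ‖d1^[k] a n - d1^[k] a (n + 1)‖ := rfl
      _ ≤ ‖d1^[k] a n‖ + ‖d1^[k] a (n + 1)‖ := norm_sub_le _ _
      _ ≤ 2 ^ k * M + 2 ^ k * M := add_le_add (ih n) (ih (n + 1))
      _ = 2 ^ (k + 1) * M := by ring

/-- Hockey-stick identity. -/
lemma hockey (r : ℕ) : ∀ k : ℕ, ∑ i ∈ Finset.range (k + 1), (r + i).choose r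
    = (r + k + 1).choose (r + 1) := by
  intro k
  induction k with
  | zero => simp
  | succ k ih =>
    rw [Finset.sum_range_succ, ih]
    have : r + (k + 1) + 1 = (r + k + 1) + 1 := by ring
    rw [this, Nat.choose_succ_succ (r + k + 1) r]
    have : r + (k + 1) = (r + k) + 1 := by ring
    rw [this]
    ring

/-- If `(a n)` is bounded and `∑ C(m+n, m) |(𝔡₁^{m+1} a) n| < ∞` for some `m ≥ 1`,
then `∑ C(m+n-1, m-1) |(𝔡₁^m a) n| < ∞`. -/
theorem stmt_3 (m : ℕ) (hm : 1 ≤ m) (a : ℕ → ℂ) (M : ℝ) (hbd : ∀ n, ‖a n‖ ≤ M)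
    (hsum : Summable (fun n => ((m + n).choose m : ℝ) * ‖d1^[m + 1] a n‖)) :
    Summable (fun n => ((m + n - 1).choose (m - 1) : ℝ) * ‖d1^[m] a n‖) := by
  set c : ℕ → ℂ := d1^[m + 1] a with hc_def
  set b : ℕ → ℂ := d1^[m] a with hb_def
  set B : ℕ → ℂ := d1^[m - 1] a with hB_def
  have hdb : ∀ n, c n = b n - b (n + 1) := by
    intro n
    rw [hc_def, Function.iterate_succ_apply']
    rfl
  have hdB : ∀ n, b n = B n - B (n + 1) := by
    intro n
    rw [hb_def, hB_def, show m = (m - 1) + 1 from (Nat.succ_pred_eq_of_pos hm).symm,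
      Function.iterate_succ_apply']
    rfl
  -- summability of ‖c‖
  have hone : ∀ k : ℕ, (1 : ℝ) ≤ ((m + k).choose m : ℝ) := by
    intro k
    exact_mod_cast Nat.one_le_iff_ne_zero.mpr (Nat.choose_pos (Nat.le_add_right m k)).ne'
  have hcnorm : Summable fun k => ‖c k‖ :=
    hsum.of_nonneg_of_le (fun _ => norm_nonneg _)
      (fun k => le_mul_of_one_le_left (norm_nonneg _) (hone k))
  have hcsum : Summable c := hcnorm.of_norm
  -- b tends to some limit L
  have hpart : ∀ n : ℕ, ∑ j ∈ Finset.range n, c j = b 0 - b n := by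
    intro n
    rw [show (∑ j ∈ Finset.range n, c j) = ∑ j ∈ Finset.range n, (b j - b (j + 1)) from
      Finset.sum_congr rfl fun j _ => hdb j]
    exact Finset.sum_range_sub' b n
  have htend : Filter.Tendsto b Filter.atTop (nhds (b 0 - ∑' k, c k)) := by
    have h1 : Filter.Tendsto (fun n => ∑ j ∈ Finset.range n, c j) Filter.atTop
        (nhds (∑' k, c k)) := hcsum.hasSum.tendsto_sum_nat
    have h2 : Filter.Tendsto (fun n => b 0 - ∑ j ∈ Finset.range n, c j) Filter.atTop
        (nhds (b 0 - ∑' k, c k)) := tendsto_const_nhds.sub h1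
    refine h2.congr fun n => ?_
    rw [hpart n]; ring
  set L : ℂ := b 0 - ∑' k, c k with hL_def
  -- L = 0 by the Cesàro argument using boundedness of B
  have hL : L = 0 := by
    have hces : Filter.Tendsto (fun n : ℕ => (n : ℝ)⁻¹ • ∑ i ∈ Finset.range n, b i)
        Filter.atTop (nhds L) := htend.cesaro_smul
    have hBb : ∀ n : ℕ, ∑ i ∈ Finset.range n, b i = B 0 - B n := by
      intro n
      rw [show (∑ i ∈ Finset.range n, b i) = ∑ i ∈ Finset.range n, (B i - B (i + 1)) from
        Finset.sum_congr rfl fun i _ => hdB i]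
      exact Finset.sum_range_sub' B n
    have hM : 0 ≤ M := le_trans (norm_nonneg _) (hbd 0)
    have hzero : Filter.Tendsto (fun n : ℕ => (n : ℝ)⁻¹ • (B 0 - B n)) Filter.atTop (nhds 0) := by
      have hGten : Filter.Tendsto (fun n : ℕ => (n : ℝ)⁻¹ * (2 * (2 ^ (m - 1) * M)))
          Filter.atTop (nhds 0) := by
        have h1 : Filter.Tendsto (fun n : ℕ => (n : ℝ)⁻¹) Filter.atTop (nhds 0) :=
          tendsto_inv_atTop_zero.comp (tendsto_natCast_atTop_atTop (R := ℝ))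
        simpa using h1.mul_const (2 * (2 ^ (m - 1) * M))
      refine squeeze_zero_norm (fun n => ?_) hGten
      · rw [norm_smul, norm_inv, Real.norm_natCast]
        apply mul_le_mul_of_nonneg_left _ (inv_nonneg.mpr (Nat.cast_nonneg n))
        calc ‖B 0 - B n‖ ≤ ‖B 0‖ + ‖B n‖ := norm_sub_le _ _
          _ ≤ 2 ^ (m - 1) * M + 2 ^ (m - 1) * M :=
            add_le_add (d1_iter_bound a M hbd _ 0) (d1_iter_bound a M hbd _ n)
          _ = 2 * (2 ^ (m - 1) * M) := by ring
    have := hces.congr fun n => by rw [hBb n]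
    exact tendsto_nhds_unique this hzero
  have hb0 : Filter.Tendsto b Filter.atTop (nhds 0) := hL ▸ htend
  -- b n = ∑' j, c (n + j)
  have hbn : ∀ n, ‖b n‖ ≤ ∑' j, ‖c (n + j)‖ := by
    intro n
    have hsn : Summable fun j => c (n + j) :=
      ((summable_nat_add_iff n).2 hcsum).congr fun j => by rw [add_comm]
    have h1 : Filter.Tendsto (fun N => ∑ j ∈ Finset.range N, c (n + j)) Filter.atTop
        (nhds (∑' j, c (n + j))) := hsn.hasSum.tendsto_sum_nat
    have h2 : Filter.Tendsto (fun N => ∑ j ∈ Finset.range N, c (n + j)) Filter.atTop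
        (nhds (b n)) := by
      have hts : ∀ N, ∑ j ∈ Finset.range N, c (n + j) = b n - b (n + N) := by
        intro N
        rw [show (∑ j ∈ Finset.range N, c (n + j))
            = ∑ j ∈ Finset.range N, ((fun j => b (n + j)) j - (fun j => b (n + j)) (j + 1)) from
          Finset.sum_congr rfl fun j _ => by simp only []; rw [hdb (n + j), ← add_assoc]]
        simpa using Finset.sum_range_sub' (fun j => b (n + j)) N
      have htail : Filter.Tendsto (fun N => b (n + N)) Filter.atTop (nhds 0) :=
        (hb0.comp (Filter.tendsto_add_atTop_nat n)).congr fun N => by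
        simp [Function.comp, Nat.add_comm]
      have := Filter.Tendsto.sub
        (tendsto_const_nhds : Filter.Tendsto (fun _ : ℕ => b n) Filter.atTop (nhds (b n))) htail
      rw [sub_zero] at this
      exact this.congr fun N => (hts N).symm
    have heq : b n = ∑' j, c (n + j) := tendsto_nhds_unique h2 h1
    rw [heq]
    exact norm_tsum_le_tsum_norm hsn.norm
  -- double sum machinery
  set w : ℕ → ℝ := fun n => ((m - 1 + n).choose (m - 1) : ℝ) with hw_def
  have hwnn : ∀ n, (0 : ℝ) ≤ w n := fun n => Nat.cast_nonneg _
  set f : (Σ k : ℕ, Finset.HasAntidiagonal.antidiagonal k) → ℝ :=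
    fun x => w x.2.1.1 * ‖c (x.2.1.1 + x.2.1.2)‖ with hf_def
  have hfnn : ∀ x, 0 ≤ f x := fun x => mul_nonneg (hwnn _) (norm_nonneg _)
  have hfib : ∀ k : ℕ, ∑' p : Finset.HasAntidiagonal.antidiagonal k, f ⟨k, p⟩
      = ((m + k).choose m : ℝ) * ‖c k‖ := by
    intro k
    rw [tsum_fintype]
    have : ∀ p : Finset.HasAntidiagonal.antidiagonal k, f ⟨k, p⟩ = w p.1.1 * ‖c k‖ := by
      rintro ⟨⟨i, j⟩, hp⟩
      rw [Finset.HasAntidiagonal.mem_antidiagonal] at hp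
      simp only [hf_def, hp]
    rw [Finset.sum_congr rfl fun p _ => this p, ← Finset.sum_mul]
    congr 1
    rw [Finset.sum_coe_sort (Finset.HasAntidiagonal.antidiagonal k) (fun p => w p.1),
      Finset.Nat.sum_antidiagonal_eq_sum_range_succ_mk]
    rw [hw_def]
    rw [show ((m + k).choose m : ℝ) = (((m - 1) + k + 1).choose ((m - 1) + 1) : ℝ) by
      congr 2 <;> omega]
    beta_reduce
    exact_mod_cast hockey (m - 1) k
  have hfsum : Summable f := by
    rw [summable_sigma_of_nonneg hfnn]
    constructor
    · intro k; exact Summable.of_finite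
    · exact hsum.congr fun k => (hfib k).symm
  have hprod : Summable fun p : ℕ × ℕ => w p.1 * ‖c (p.1 + p.2)‖ := by
    have := hfsum.comp_injective
      (Finset.HasAntidiagonal.sigmaAntidiagonalEquivProd (A := ℕ)).symm.injective
    exact this.congr fun p => rfl
  have hfact : Summable fun n => w n * ∑' j, ‖c (n + j)‖ := by
    have h := (summable_prod_of_nonneg
      (fun p : ℕ × ℕ => mul_nonneg (hwnn _) (norm_nonneg _))).1 hprod
    refine h.2.congr fun n => ?_
    exact tsum_mul_left (a := w n) (f := fun j => ‖c (n + j)‖)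
  -- conclude
  refine hfact.of_nonneg_of_le
    (fun n => mul_nonneg (Nat.cast_nonneg _) (norm_nonneg _)) (fun n => ?_)
  have hwn : ((m + n - 1).choose (m - 1) : ℝ) = w n := by
    rw [hw_def]; congr 2; omega
  rw [hwn]
  exact mul_le_mul_of_nonneg_left (hbn n) (hwnn n)
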